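/- arXiv:1609.03097 — 4 statements merged into one kernel-verified Lean document; each statement's English description precedes it below -/
import Mathlib

section
/- A number s ∈ (0, 1/2) is a fixed point of the renormalization map R (i.e., R(s) = s) if and only if there exists an integer n ≥ 1 such that s = (−n + √(n(n+2)))/2. -/
noncomputable section

/-- The renormalization map R : [0,1) → [0,1),
R(s) = s/(1−2s) − ⌊s/(1−2s)⌋ for s ∈ [0,1/2), R(s) = 1−s for s ∈ [1/2,1). -/
def Rmap (s : ℝ) : ℝ :=
  if s < 1/2 then s / (1 - 2*s) - ⌊s / (1 - 2*s)⌋ else 1 - s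

/-
For `s ∈ (0, 1/2)`, `R s = s` says `s / (1 - 2s) = s + n` with `n = ⌊s / (1 - 2s)⌋`. Clearing the
denominator, this is the quadratic `(2s + n)² = n (n + 2)`; it forces `n > 0`, hence `2s + n > 0`,
so `s` is the larger root `(-n + √(n (n + 2))) / 2`.
-/

theorem Rmap_of_lt_half {s : ℝ} (hs : s < 1/2) : Rmap s = Int.fract (s / (1 - 2*s)) := by
  rw [Rmap, if_pos hs, Int.fract]

theorem div_one_sub_two_mul_eq_add_iff {s t : ℝ} (hs : 2*s ≠ 1) :
    s / (1 - 2*s) = s + t ↔ (2*s + t)^2 = t * (t + 2) := by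
  rw [div_eq_iff (sub_ne_zero.2 hs.symm)]
  constructor <;> intro h
  · linear_combination 2 * h
  · linear_combination h / 2

theorem pos_of_two_mul_add_sq_eq {s t : ℝ} (h0 : 0 < s) (h1 : s < 1/2)
    (h : (2*s + t)^2 = t * (t + 2)) : 0 < t := by
  have hquad : t * (1 - 2*s) = 2 * s^2 := by linear_combination -h / 2
  nlinarith [mul_pos h0 h0]

theorem eq_neg_add_sqrt_div_two_iff {s t : ℝ} (h : 0 < 2*s + t) :
    s = (-t + √(t * (t + 2))) / 2 ↔ (2*s + t)^2 = t * (t + 2) := by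
  rw [sq, ← Real.sqrt_eq_iff_mul_self_eq_of_pos h]
  constructor <;> intro h' <;> linarith

/-- A number s ∈ (0,1/2) is a fixed point of R iff
s = (−n + √(n(n+2)))/2 for some integer n ≥ 1. -/
theorem stmt_3 (s : ℝ) (h0 : 0 < s) (h1 : s < 1/2) :
    Rmap s = s ↔
      ∃ n : ℤ, 1 ≤ n ∧ s = (-(n : ℝ) + Real.sqrt ((n : ℝ) * ((n : ℝ) + 2))) / 2 := by
  rw [Rmap_of_lt_half h1, Int.fract_eq_iff]
  simp only [h0.le, true_and, show s < 1 by linarith]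
  refine exists_congr fun n => ?_
  rw [sub_eq_iff_eq_add', div_one_sub_two_mul_eq_add_iff (by linarith)]
  constructor
  · intro h
    have hn : (0 : ℝ) < n := pos_of_two_mul_add_sq_eq h0 h1 h
    exact ⟨by exact_mod_cast hn, (eq_neg_add_sqrt_div_two_iff (by linarith)).2 h⟩
  · rintro ⟨hn, hs⟩
    have hn' : (1 : ℝ) ≤ n := by exact_mod_cast hn
    exact (eq_neg_add_sqrt_div_two_iff (by linarith)).1 hs

end
end

section
/- For every integer n ≥ 1, the number s = (−n + √(n(n+2)))/2 lies in (0,1) and its simple continued fraction expansion is (0; 2, n, 2, n, 2, n, …); that is, ⌊s⌋ = 0 and for every k ≥ 1 the k-th partial quotient of the continued fraction expansion of s equals 2 if k is odd and equals n if k is even. -/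
noncomputable section

/-- The Gauss-type iteration for the simple continued fraction expansion:
s₀ = s, s_{k+1} = 1/(s_k − ⌊s_k⌋).  The k-th partial quotient is a_k = ⌊s_k⌋. -/
def cfState (s : ℝ) : ℕ → ℝ
  | 0 => s
  | k + 1 => 1 / (cfState s k - ⌊cfState s k⌋)

/-- For every integer n ≥ 1, s = (−n + √(n(n+2)))/2 lies in (0,1)
and its simple continued fraction expansion is (0; 2, n, 2, n, …): ⌊s⌋ = 0 and the
k-th partial quotient equals 2 for odd k and n for even k ≥ 1. -/
theorem stmt_4 (n : ℕ) (hn : 1 ≤ n)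
    (s : ℝ) (hsdef : s = (-(n : ℝ) + Real.sqrt ((n : ℝ) * ((n : ℝ) + 2))) / 2) :
    0 < s ∧ s < 1 ∧ ⌊s⌋ = 0 ∧
      ∀ k : ℕ, 1 ≤ k → ⌊cfState s k⌋ = if Odd k then (2 : ℤ) else (n : ℤ) := by
  have hn1 : (1:ℝ) ≤ (n:ℝ) := by exact_mod_cast hn
  set r := Real.sqrt ((n : ℝ) * ((n : ℝ) + 2)) with hr
  have hr0 : 0 ≤ r := Real.sqrt_nonneg _
  have hrsq : r ^ 2 = (n:ℝ) * ((n:ℝ) + 2) := Real.sq_sqrt (by nlinarith)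
  have h1 : (n:ℝ) < r := by nlinarith
  have h2 : r < (n:ℝ) + 1 := by nlinarith
  have hs : s = (r - n) / 2 := by rw [hsdef]; ring
  have hs0 : 0 < s := by rw [hs]; linarith
  have hs1 : s < 1 := by rw [hs]; linarith
  have hfs : ⌊s⌋ = 0 := by
    apply Int.floor_eq_zero_iff.mpr
    exact ⟨hs0.le, by simpa using hs1⟩
  have hnpos : (0:ℝ) < (n:ℝ) := by linarith
  have hnne : (n:ℝ) ≠ 0 := ne_of_gt hnpos
  have hrnne : r - n ≠ 0 := by intro h; linarith [sub_eq_zero.mp h]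
  have h2ne : (2:ℝ) ≠ 0 := by norm_num
  -- floors of the two periodic values
  have hfA : ⌊(r + n) / n⌋ = 2 := by
    rw [Int.floor_eq_iff]
    push_cast
    constructor
    · rw [le_div_iff₀ hnpos]; linarith
    · rw [div_lt_iff₀ hnpos]; nlinarith
  have hfB : ⌊(r + n) / 2⌋ = (n:ℤ) := by
    rw [Int.floor_eq_iff]
    push_cast
    constructor
    · rw [le_div_iff₀ (by norm_num : (0:ℝ) < 2)]; linarith
    · rw [div_lt_iff₀ (by norm_num : (0:ℝ) < 2)]; linarith
  have hkey0 : (2:ℝ) * n = (r + n) * (r - n) := by nlinarith [hrsq]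
  -- the iteration values for k ≥ 1
  have key : ∀ k : ℕ, cfState s (k + 1) = if Odd (k + 1) then (r + n) / n else (r + n) / 2 := by
    intro k
    induction k with
    | zero =>
      rw [if_pos (by decide : Odd 1)]
      show 1 / (s - ⌊s⌋) = (r + n) / n
      rw [hfs, hs]
      push_cast
      rw [sub_zero, one_div_div, div_eq_div_iff hrnne hnne]
      nlinarith [hkey0]
    | succ m ih =>
      show 1 / (cfState s (m + 1) - ⌊cfState s (m + 1)⌋) = _
      rw [ih]
      rcases Nat.even_or_odd (m + 1) with he | ho
      · have h1' : ¬ Odd (m + 1) := Nat.not_odd_iff_even.mpr he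
        have h2' : Odd (m + 2) := he.add_one
        rw [if_neg h1', if_pos h2', hfB]
        push_cast
        have hB2 : (r + n) / 2 - n = (r - n) / 2 := by ring
        rw [hB2, one_div_div, div_eq_div_iff hrnne hnne]
        nlinarith [hkey0]
      · have h2' : ¬ Odd (m + 2) := Nat.not_odd_iff_even.mpr ho.add_one
        rw [if_pos ho, if_neg h2', hfA]
        push_cast
        have hA2 : (r + n) / n - 2 = (r - n) / n := by field_simp; ring
        rw [hA2, one_div_div, div_eq_div_iff hrnne h2ne]
        nlinarith [hkey0]
  refine ⟨hs0, hs1, hfs, ?_⟩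
  intro k hk
  obtain ⟨m, rfl⟩ := Nat.exists_eq_add_of_le hk
  rw [add_comm 1 m, key m]
  by_cases h : Odd (m + 1)
  · rw [if_pos h, if_pos h, hfA]
  · rw [if_neg h, if_neg h, hfB]

end
end

section
/- For every rational number p/q ∈ [0, 1), there exists an integer k ≥ 0 such that R^k(p/q) ∈ {0, 1/2}, where R^k denotes the k-fold iterate of R. -/
noncomputable section

/-- rational version -/
def Rq (x : ℚ) : ℚ :=
  if x < 1/2 then Int.fract (x / (1 - 2*x)) else 1 - x

lemma Rmap_cast (x : ℚ) : Rmap (x : ℝ) = (Rq x : ℝ) := by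
  unfold Rmap Rq
  by_cases h : x < 1/2
  · rw [if_pos h, if_pos (by rw [show (1:ℝ)/2 = ((1/2:ℚ):ℝ) by norm_num]; exact_mod_cast h)]
    rw [Rat.cast_fract]
    unfold Int.fract
    push_cast
    ring_nf
  · rw [if_neg h, if_neg (by rw [show (1:ℝ)/2 = ((1/2:ℚ):ℝ) by norm_num]; exact_mod_cast h)]
    push_cast; ring

lemma fract_den_le (r : ℚ) : (Int.fract r).den ≤ r.den := by
  have : (Int.fract r).den ∣ r.den := by
    have h := Rat.add_den_dvd r (-(⌊r⌋ : ℚ))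
    simpa [Int.fract, sub_eq_add_neg] using h
  exact Nat.le_of_dvd r.pos this

lemma den_lt (x : ℚ) (hx : 0 < x) (h : x < 1/2) : (Rq x).den < x.den := by
  have hnum : 0 < x.num := Rat.num_pos.2 hx
  have hxden : x * (x.den : ℚ) = x.num := Rat.mul_den_eq_num x
  have h2 : 2 * x.num < (x.den : ℤ) := by
    have h2' : (2 * x.num : ℚ) < (x.den : ℚ) := by
      have := mul_lt_mul_of_pos_right h (by exact_mod_cast x.pos : (0:ℚ) < (x.den : ℚ))
      calc (2 * x.num : ℚ) = 2 * (x * x.den) := by rw [hxden]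
        _ = x * x.den * 2 := by ring
        _ < 1/2 * x.den * 2 := by
            have := mul_lt_mul_of_pos_right
              (mul_lt_mul_of_pos_right h (by exact_mod_cast x.pos : (0:ℚ) < (x.den:ℚ)))
              (by norm_num : (0:ℚ) < 2)
            linarith
        _ = x.den := by ring
    exact_mod_cast h2'
  have hdpos : (0:ℤ) < (x.den : ℤ) - 2 * x.num := by linarith
  have heq : x / (1 - 2*x) = Rat.divInt x.num ((x.den : ℤ) - 2 * x.num) := by
    rw [Rat.divInt_eq_div]
    rw [div_eq_div_iff]
    · push_cast
      calc x * ((x.den : ℚ) - 2 * x.num) = x * x.den - 2 * x.num * x := by ring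
        _ = (x.num : ℚ) * (1 - 2*x) := by rw [hxden]; ring
    · intro hc
      have : x = 1/2 := by linarith [sub_eq_zero.1 hc]
      rw [this] at h; norm_num at h
    · exact_mod_cast hdpos.ne'
  have hdvd : ((x / (1 - 2*x)).den : ℤ) ∣ ((x.den : ℤ) - 2 * x.num) := by
    rw [heq]; exact Rat.den_dvd _ _
  have hle : ((x / (1 - 2*x)).den : ℤ) ≤ (x.den : ℤ) - 2 * x.num :=
    Int.le_of_dvd hdpos hdvd
  have hfr : ((Rq x).den : ℤ) ≤ ((x / (1 - 2*x)).den : ℤ) := by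
    rw [Rq, if_pos h]
    exact_mod_cast fract_den_le _
  omega

lemma Rq_mem (x : ℚ) (_h0 : 0 ≤ x) (h1 : x < 1) : 0 ≤ Rq x ∧ Rq x < 1 := by
  unfold Rq
  by_cases h : x < 1/2
  · rw [if_pos h]; exact ⟨Int.fract_nonneg _, Int.fract_lt_one _⟩
  · rw [if_neg h]; push_neg at h; constructor <;> linarith

lemma main_lemma : ∀ n : ℕ, ∀ x : ℚ, x.den ≤ n → 0 ≤ x → x < 1 →
    ∃ k : ℕ, Rmap^[k] (x : ℝ) ∈ ({0, 1/2} : Set ℝ) := by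
  intro n
  induction n using Nat.strong_induction_on with
  | _ n IH =>
    intro x hd h0 h1
    rcases eq_or_lt_of_le h0 with h0 | h0
    · exact ⟨0, by simp [← h0]⟩
    by_cases hhalf : x = 1/2
    · exact ⟨0, by simp [hhalf]⟩
    rcases lt_or_ge x (1/2) with hlt | hge
    · -- 0 < x < 1/2
      have hdlt : (Rq x).den < x.den := den_lt x h0 hlt
      obtain ⟨hm0, hm1⟩ := Rq_mem x h0.le h1
      obtain ⟨k, hk⟩ := IH (Rq x).den (lt_of_lt_of_le hdlt hd) (Rq x) le_rfl hm0 hm1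
      refine ⟨k + 1, ?_⟩
      rw [Function.iterate_succ_apply, Rmap_cast]
      exact hk
    · -- 1/2 < x < 1
      have hgt : 1/2 < x := lt_of_le_of_ne hge (Ne.symm hhalf)
      set y := Rq x with hy
      have hyval : y = 1 - x := by
        rw [hy, Rq, if_neg (not_lt.2 hge)]
      have hy0 : 0 < y := by rw [hyval]; linarith
      have hy2 : y < 1/2 := by rw [hyval]; linarith
      have hyden : y.den ≤ x.den := by
        have : y.den ∣ x.den := by
          have h := Rat.add_den_dvd 1 (-x)
          rw [hyval]
          simpa [sub_eq_add_neg] using h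
        exact Nat.le_of_dvd x.pos this
      have hdlt : (Rq y).den < y.den := den_lt y hy0 hy2
      obtain ⟨hm0, hm1⟩ := Rq_mem y hy0.le (by linarith)
      obtain ⟨k, hk⟩ := IH (Rq y).den (by omega) (Rq y) le_rfl hm0 hm1
      refine ⟨k + 2, ?_⟩
      rw [show k + 2 = k + 1 + 1 from rfl, Function.iterate_succ_apply, Rmap_cast,
        Function.iterate_succ_apply, Rmap_cast]
      exact hk

/-- For every rational p/q ∈ [0,1) there is k ≥ 0 with
R^k(p/q) ∈ {0, 1/2}. -/
theorem stmt_5 (x : ℚ) (h0 : 0 ≤ x) (h1 : x < 1) :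
    ∃ k : ℕ, Rmap^[k] (x : ℝ) ∈ ({0, 1/2} : Set ℝ) := by
  exact main_lemma x.den x le_rfl h0 h1

end
end

section
/- Let s = p/q ∈ (0,1) be a rational number in lowest terms with q ≥ 3 (equivalently, s ∉ {0, 1/2}). Then R(R(s)) is rational and its denominator in lowest terms is at most q − 2. -/
noncomputable section

lemma cast_lt_half {y : ℚ} : (y : ℝ) < 1/2 ↔ y < 1/2 := by
  rw [show (1/2:ℝ) = ((1/2:ℚ):ℝ) by norm_num]; exact Rat.cast_lt

lemma two_num_lt (y : ℚ) (hy : y < 1/2) : 2 * y.num < (y.den : ℤ) := by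
  have hd : (0:ℚ) < (y.den : ℚ) := by exact_mod_cast y.pos
  rw [← Rat.num_div_den y, div_lt_div_iff₀ hd (by norm_num)] at hy
  have h : (y.num : ℚ) * 2 < (y.den : ℚ) := by linarith
  have h' : y.num * 2 < (y.den : ℤ) := by exact_mod_cast h
  linarith

lemma den_one_sub (y : ℚ) : (1 - y).den = y.den := by
  have h1 : (1 - y).den ∣ y.den := by
    have := Rat.add_den_dvd 1 (-y)
    have e : (1 : ℚ) + -y = 1 - y := by ring
    rw [e] at this
    simpa using this
  have h2 : y.den ∣ (1 - y).den := by
    have := Rat.add_den_dvd 1 (-(1 - y))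
    have e : (1 : ℚ) + -(1 - y) = y := by ring
    rw [e, Rat.den_neg_eq_den] at this
    simpa using this
  exact Nat.dvd_antisymm h1 h2

lemma step (y : ℚ) (_h0 : 0 ≤ y) (hy : y < 1/2) :
    ∃ z : ℚ, (z : ℝ) = Rmap (y : ℝ) ∧ 0 ≤ z ∧ z < 1 ∧
      (z.den : ℤ) ≤ (y.den : ℤ) - 2 * y.num := by
  set w : ℚ := y / (1 - 2*y) with hw
  refine ⟨Int.fract w, ?_, Int.fract_nonneg w, Int.fract_lt_one w, ?_⟩
  · have hlt : (y : ℝ) < 1/2 := cast_lt_half.mpr hy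
    rw [Rmap, if_pos hlt]
    have hcast : ((w : ℚ) : ℝ) = (y : ℝ) / (1 - 2*(y:ℝ)) := by push_cast [hw]; ring_nf
    rw [← hcast, Rat.floor_cast]
    simp only [Int.fract]
    push_cast
    ring
  · have hb : (0:ℤ) < (y.den : ℤ) - 2 * y.num := by linarith [two_num_lt y hy]
    have hd : (0:ℚ) < (y.den : ℚ) := by exact_mod_cast y.pos
    have hm : (y.num : ℚ) = y * y.den := (div_eq_iff hd.ne').mp (Rat.num_div_den y)
    have hb' : ((((y.den : ℤ) - 2 * y.num : ℤ)) : ℚ) ≠ 0 := by exact_mod_cast hb.ne'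
    have h2y : (1 : ℚ) - 2*y ≠ 0 := by
      intro h
      have : y = 1/2 := by linarith
      rw [this] at hy; norm_num at hy
    have hwq : w = (y.num : ℚ) / (((y.den : ℤ) - 2 * y.num : ℤ) : ℚ) := by
      rw [hw, div_eq_div_iff h2y hb']
      push_cast
      linear_combination -hm
    have hdvd : (w.den : ℤ) ∣ ((y.den : ℤ) - 2 * y.num) := by
      have := Rat.den_dvd (y.num) ((y.den : ℤ) - 2 * y.num)
      rwa [Rat.divInt_eq_div, ← hwq] at this
    have hwle : (w.den : ℤ) ≤ (y.den : ℤ) - 2 * y.num := Int.le_of_dvd hb hdvd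
    have hfd : (Int.fract w).den ∣ w.den := by
      have := Rat.add_den_dvd w (-(⌊w⌋ : ℚ))
      simpa [Int.fract, sub_eq_add_neg] using this
    have : ((Int.fract w).den : ℤ) ≤ (w.den : ℤ) := by
      exact_mod_cast Nat.le_of_dvd w.pos hfd
    linarith

/-- If s = p/q ∈ (0,1) is rational in lowest terms with q ≥ 3,
then R(R(s)) is rational and its denominator in lowest terms is at most q − 2. -/
theorem stmt_6 (x : ℚ) (h0 : 0 < x) (h1 : x < 1) (hden : 3 ≤ x.den) :
    ∃ y : ℚ, (y : ℝ) = Rmap (Rmap (x : ℝ)) ∧ y.den + 2 ≤ x.den := by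
  have hnum : 1 ≤ x.num := Rat.num_pos.mpr h0
  by_cases hc : x < 1/2
  · obtain ⟨y, hyR, hy0, hy1, hyd⟩ := step x h0.le hc
    have hyden : y.den + 2 ≤ x.den := by
      have : (y.den : ℤ) + 2 ≤ (x.den : ℤ) := by linarith
      exact_mod_cast this
    by_cases hy2 : y < 1/2
    · obtain ⟨z, hzR, _, _, hzd⟩ := step y hy0 hy2
      refine ⟨z, by rw [hzR, hyR], ?_⟩
      have hn0 : 0 ≤ y.num := Rat.num_nonneg.mpr hy0
      have : (z.den : ℤ) ≤ (y.den : ℤ) := by linarith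
      have hz : z.den ≤ y.den := by exact_mod_cast this
      omega
    · refine ⟨1 - y, ?_, ?_⟩
      · have hnl : ¬ ((y : ℝ) < 1/2) := fun h => hy2 (cast_lt_half.mp h)
        rw [← hyR, Rmap, if_neg hnl]
        push_cast; ring
      · rw [den_one_sub]; exact hyden
  · push_neg at hc
    have hx2 : x ≠ 1/2 := by
      intro h; rw [h] at hden; norm_num at hden
    have hc' : 1/2 < x := lt_of_le_of_ne hc (Ne.symm hx2)
    set y : ℚ := 1 - x with hy
    have hy0 : 0 < y := by rw [hy]; linarith
    have hy2 : y < 1/2 := by rw [hy]; linarith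
    have hyden : y.den = x.den := den_one_sub x
    have hynum : 1 ≤ y.num := Rat.num_pos.mpr hy0
    have hR1 : Rmap (x : ℝ) = (y : ℝ) := by
      have hnl : ¬ ((x : ℝ) < 1/2) := fun h => absurd (cast_lt_half.mp h) (not_lt.mpr hc)
      rw [Rmap, if_neg hnl, hy]; push_cast; ring
    obtain ⟨z, hzR, _, _, hzd⟩ := step y hy0.le hy2
    refine ⟨z, by rw [hR1, hzR], ?_⟩
    have h2 : (z.den : ℤ) + 2 ≤ (y.den : ℤ) := by linarith
    have h3 : z.den + 2 ≤ y.den := by exact_mod_cast h2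
    omega

end
end
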